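/- Let n ≥ 1 and let q_i(λ), i = 1,…,n, be the Viète polynomials on ℝ^n. Then for all λ ∈ ℝ^n and all indices j, r ∈ {1,…,n} one has ∑_{i=1}^n (∂q_i/∂λ_j)(λ) · λ_r^{n−i} = −∏_{s≠j} (λ_r − λ_s). In particular, if the entries of λ are pairwise distinct, then ∑_{i=1}^n (∂q_i/∂λ_j)(λ) · λ_r^{n−i} = −δ_{jr} Δ_r(λ). -/

import Mathlib

noncomputable section

/-- Viète polynomial `q_i(λ) = (-1)^i e_i(λ)`; by convention `q_0 = 1` and `q_i = 0` for `i > n`. -/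
def viete {n : ℕ} (i : ℕ) (lam : Fin n → ℝ) : ℝ :=
  (-1 : ℝ) ^ i * ∑ s ∈ Finset.powersetCard i (Finset.univ : Finset (Fin n)), ∏ j ∈ s, lam j

/-- The partial derivative `∂q_i/∂λ_j` of the `i`-th Viète polynomial. -/
def vieteD {n : ℕ} (i : ℕ) (lam : Fin n → ℝ) (j : Fin n) : ℝ :=
  fderiv ℝ (viete i) lam (Pi.single j 1)

/-- `Δ_j(λ) = ∏_{s ≠ j} (λ_j - λ_s)`. -/
def Delta {n : ℕ} (lam : Fin n → ℝ) (j : Fin n) : ℝ :=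
  ∏ s ∈ Finset.univ.erase j, (lam j - lam s)

/-! Vieta's formula `∏ₛ (x - λₛ) = ∑ᵢ qᵢ(λ) xⁿ⁻ⁱ` is an identity in `λ`. Differentiating it in
`λⱼ`, the product rule turns the left side into `-∏_{s ≠ j} (x - λₛ)`, while the right side becomes
the sum in question, the term `q₀ = 1` being constant. At `x = λᵣ` with `r ≠ j` the product
contains the factor `λᵣ - λᵣ = 0`. -/

open Finset

theorem fderiv_prod_sub_apply_single {𝕜 ι : Type*} [NontriviallyNormedField 𝕜] [Fintype ι]
    [DecidableEq ι] (x : 𝕜) (lam : ι → 𝕜) (j : ι) :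
    fderiv 𝕜 (fun μ : ι → 𝕜 => ∏ s, (x - μ s)) lam (Pi.single j 1) =
      -∏ s ∈ univ.erase j, (x - lam s) := by
  have hfactor (s : ι) (_ : s ∈ univ) :
      HasFDerivAt (fun μ : ι → 𝕜 => x - μ s) (-ContinuousLinearMap.proj (R := 𝕜) s) lam :=
    (hasFDerivAt_apply s lam).const_sub x
  rw [(HasFDerivAt.finsetProd hfactor).fderiv]
  simp [Pi.single_apply]

theorem prod_sub_eq_sum_viete {n : ℕ} (lam : Fin n → ℝ) (x : ℝ) :
    ∏ s, (x - lam s) = ∑ i ∈ range (n + 1), viete i lam * x ^ (n - i) := by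
  have h := congrArg (Polynomial.eval x) (Multiset.prod_X_sub_X_eq_sum_esymm (univ.val.map lam))
  simp only [Polynomial.eval_multiset_prod, Multiset.map_map, Function.comp_def,
    Polynomial.eval_sub, Polynomial.eval_X, Polynomial.eval_C, Polynomial.eval_finsetSum,
    Polynomial.eval_mul, Polynomial.eval_pow, Polynomial.eval_neg, Polynomial.eval_one,
    Multiset.card_map, card_val, card_univ, Fintype.card_fin, esymm_map_val] at h
  rw [prod_eq_multiset_prod, h]
  exact sum_congr rfl fun i _ => by rw [viete]; ring

theorem differentiable_viete {n : ℕ} (i : ℕ) : Differentiable ℝ (viete (n := n) i) := by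
  unfold viete; fun_prop

theorem viete_zero {n : ℕ} : viete (n := n) 0 = fun _ => 1 := by
  funext; simp [viete]

theorem sum_vieteD_mul_pow {n : ℕ} (lam : Fin n → ℝ) (j : Fin n) (x : ℝ) :
    ∑ i ∈ Icc 1 n, vieteD i lam j * x ^ (n - i) = -∏ s ∈ univ.erase j, (x - lam s) := by
  have hderiv := HasFDerivAt.fun_sum fun i (_ : i ∈ range (n + 1)) =>
    (differentiable_viete i lam).hasFDerivAt.mul_const (x ^ (n - i))
  simp only [← fderiv_prod_sub_apply_single, prod_sub_eq_sum_viete]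
  rw [hderiv.fderiv, Nat.range_succ_eq_Icc_zero,
    ← insert_Icc_add_one_left_eq_Icc n.zero_le, sum_insert (by simp)]
  simp [vieteD, viete_zero, mul_comm]

theorem viete_derivative_sum (n : ℕ) (lam : Fin n → ℝ) (j r : Fin n) :
    (∑ i ∈ Finset.Icc 1 n, vieteD i lam j * lam r ^ (n - i)) =
      -(∏ s ∈ Finset.univ.erase j, (lam r - lam s)) ∧
    (Function.Injective lam →
      (∑ i ∈ Finset.Icc 1 n, vieteD i lam j * lam r ^ (n - i)) =
        -((if j = r then (1 : ℝ) else 0) * Delta lam r)) := by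
  have hsum := sum_vieteD_mul_pow lam j (lam r)
  refine ⟨hsum, fun _ => ?_⟩
  rw [hsum]
  split_ifs with hjr
  · rw [one_mul, Delta, hjr]
  · rw [zero_mul, neg_zero, neg_eq_zero]
    exact prod_eq_zero (mem_erase.2 ⟨Ne.symm hjr, mem_univ r⟩) (sub_self _)
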